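/- Let (λ_n)_{n∈ℕ} be a sequence of nonzero real numbers satisfying a Weyl-type counting bound of order m. Then there exist constants C > 0 and c > 0 such that for all t ≥ 1, Σ_n (1/2)·erfc(|λ_n|·√t) ≤ C·exp(−c·t). -/

import Mathlib

open MeasureTheory Real Set

/-- A sequence `(λ_n)` of real numbers satisfies a Weyl-type counting bound of order `m`
if there is a constant `C > 0` such that for every `T ≥ 0` the set `{n : |λ_n| ≤ T}` is
finite with cardinality at most `C·(1+T)^m`. -/
def WeylBound (lam : ℕ → ℝ) (m : ℕ) : Prop :=
  ∃ C > (0 : ℝ), ∀ T : ℝ, 0 ≤ T →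
    {n : ℕ | |lam n| ≤ T}.Finite ∧ ({n : ℕ | |lam n| ≤ T}.ncard : ℝ) ≤ C * (1 + T) ^ m

/-- The complementary error function `erfc(x) = (2/√π) ∫_x^∞ exp(−ξ²) dξ`. -/
noncomputable def erfc (x : ℝ) : ℝ :=
  (2 / Real.sqrt π) * ∫ ξ in Ioi x, Real.exp (-ξ ^ 2)

/-!
Since `erfc x ≤ exp (-x ^ 2)` for `x ≥ 0`, each term is at most `exp (-λ_n ^ 2 t) / 2`.
The Weyl bound makes `|λ_n| → ∞` along the cofinite filter, so the nonzero `|λ_n|` are bounded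
below by some `δ > 0`; for `t ≥ 1` this gives `λ_n ^ 2 t ≥ δ ^ 2 (t - 1) + λ_n ^ 2`, which splits
off the factor `exp (-δ ^ 2 t)`. What remains is `∑ exp (-λ_n ^ 2)`, which converges because
at most `C (k + 2) ^ m` of the `λ_n` have `⌊|λ_n|⌋ = k`, and each of them contributes at most
`exp (-k)`.
-/

open Filter

lemma erfc_nonneg (x : ℝ) : 0 ≤ erfc x :=
  mul_nonneg (by positivity) (setIntegral_nonneg measurableSet_Ioi fun _ _ => (exp_pos _).le)

lemma integral_Ioi_exp_neg_sub_sq (x : ℝ) : ∫ ξ in Ioi x, exp (-(ξ - x) ^ 2) = √π / 2 := by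
  have h := (measurePreserving_add_right volume x).setIntegral_preimage_emb
    (measurableEmbedding_addRight x) (fun ξ => exp (-(ξ - x) ^ 2)) (Ioi x)
  simp only [preimage_add_const_Ioi, sub_self, add_sub_cancel_right] at h
  rw [← h]
  simpa using integral_gaussian_Ioi 1

lemma erfc_le_exp_neg_sq {x : ℝ} (hx : 0 ≤ x) : erfc x ≤ exp (-x ^ 2) := by
  have hint : Integrable fun ξ : ℝ => exp (-ξ ^ 2) := by
    simpa using integrable_exp_neg_mul_sq one_pos
  have hint' : Integrable fun ξ => exp (-x ^ 2) * exp (-(ξ - x) ^ 2) :=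
    (hint.comp_sub_right x).const_mul _
  -- `ξ ^ 2 = x ^ 2 + (ξ - x) ^ 2 + 2 x (ξ - x)`
  have hle : ∀ ξ ∈ Ioi x, exp (-ξ ^ 2) ≤ exp (-x ^ 2) * exp (-(ξ - x) ^ 2) := by
    intro ξ hξ
    rw [← exp_add]
    exact exp_le_exp.2 (by nlinarith [mem_Ioi.1 hξ])
  calc erfc x ≤ 2 / √π * ∫ ξ in Ioi x, exp (-x ^ 2) * exp (-(ξ - x) ^ 2) :=
        mul_le_mul_of_nonneg_left
          (setIntegral_mono_on hint.integrableOn hint'.integrableOn measurableSet_Ioi hle)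
          (by positivity)
    _ = exp (-x ^ 2) := by
        rw [integral_const_mul, integral_Ioi_exp_neg_sub_sq]
        field_simp

lemma erfc_abs_mul_sqrt_le {x a t : ℝ} (ha : a ≤ x ^ 2) (ht : 1 ≤ t) :
    erfc (|x| * √t) ≤ exp a * exp (-(a * t)) * exp (-x ^ 2) :=
  calc erfc (|x| * √t) ≤ exp (-(|x| * √t) ^ 2) := erfc_le_exp_neg_sq (by positivity)
    _ = exp (-(x ^ 2 * t)) := by rw [mul_pow, sq_abs, sq_sqrt (by linarith)]
    _ ≤ exp a * exp (-(a * t)) * exp (-x ^ 2) := by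
        rw [← exp_add, ← exp_add]
        exact exp_le_exp.2 (by nlinarith [mul_nonneg (sub_nonneg.2 ha) (sub_nonneg.2 ht)])

lemma summable_of_le_comp_of_card_le {ι : Type*} {f : ι → ℝ} {a b : ℕ → ℝ} (key : ι → ℕ)
    (hf : ∀ i, 0 ≤ f i) (hfa : ∀ i, f i ≤ a (key i)) (ha : ∀ k, 0 ≤ a k)
    (hcard : ∀ k (s : Finset ι), (∀ i ∈ s, key i = k) → (s.card : ℝ) ≤ b k)
    (hab : Summable fun k => b k * a k) : Summable f := by
  classical
  have hb : ∀ k, 0 ≤ b k := fun k => by simpa using hcard k ∅ (by simp)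
  refine summable_of_sum_le hf (c := ∑' k, b k * a k) fun s => ?_
  calc ∑ i ∈ s, f i ≤ ∑ i ∈ s, a (key i) := Finset.sum_le_sum fun i _ => hfa i
    _ = ∑ k ∈ s.image key, {i ∈ s | key i = k}.card • a k := Finset.sum_comp a key
    _ ≤ ∑ k ∈ s.image key, b k * a k := by
        refine Finset.sum_le_sum fun k _ => ?_
        rw [nsmul_eq_mul]
        exact mul_le_mul_of_nonneg_right
          (hcard k _ fun i hi => (Finset.mem_filter.1 hi).2) (ha k)
    _ ≤ ∑' k, b k * a k :=
        hab.sum_le_tsum _ fun k _ => mul_nonneg (hb k) (ha k)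

lemma summable_natCast_add_pow_mul_exp_neg (j m : ℕ) :
    Summable fun k : ℕ => ((k + j : ℕ) : ℝ) ^ m * exp (-(k : ℝ)) := by
  have h := (summable_nat_add_iff j).2 (Real.summable_pow_mul_exp_neg_nat_mul m one_pos)
  refine (h.mul_left (exp j)).congr fun k => ?_
  rw [mul_left_comm, ← exp_add]
  push_cast
  ring_nf

namespace WeylBound

variable {lam : ℕ → ℝ} {m : ℕ}

lemma tendsto_abs_cofinite_atTop (hW : WeylBound lam m) :
    Tendsto (fun n => |lam n|) cofinite atTop := by
  obtain ⟨C, -, hC⟩ := hW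
  refine tendsto_atTop.2 fun b => eventually_cofinite.2 ?_
  exact (hC |b| (abs_nonneg b)).1.subset fun n hn =>
    (lt_of_not_ge hn).le.trans (le_abs_self b)

lemma exists_pos_le_abs (hW : WeylBound lam m) (hlam : ∀ n, lam n ≠ 0) :
    ∃ δ > 0, ∀ n, δ ≤ |lam n| := by
  obtain ⟨n₀, hn₀⟩ := hW.tendsto_abs_cofinite_atTop.exists_forall_le
  exact ⟨|lam n₀|, abs_pos.2 (hlam n₀), hn₀⟩

lemma summable_exp_neg_sq (hW : WeylBound lam m) : Summable fun n => exp (-lam n ^ 2) := by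
  obtain ⟨C, -, hC⟩ := hW
  have hle : ∀ n, exp (-lam n ^ 2) ≤ exp (-(⌊|lam n|⌋₊ : ℝ)) := fun n => by
    have hk : (⌊|lam n|⌋₊ : ℝ) ≤ lam n ^ 2 :=
      calc (⌊|lam n|⌋₊ : ℝ) ≤ (⌊|lam n|⌋₊ : ℝ) ^ 2 := by
            exact_mod_cast Nat.le_self_pow two_ne_zero _
        _ ≤ |lam n| ^ 2 := pow_le_pow_left₀ (Nat.cast_nonneg _) (Nat.floor_le (abs_nonneg _)) 2
        _ = lam n ^ 2 := sq_abs _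
    exact exp_le_exp.2 (neg_le_neg hk)
  have hcard : ∀ k (s : Finset ℕ), (∀ n ∈ s, ⌊|lam n|⌋₊ = k) →
      (s.card : ℝ) ≤ C * ((k + 2 : ℕ) : ℝ) ^ m := fun k s hs => by
    have hsub : (s : Set ℕ) ⊆ {n | |lam n| ≤ k + 1} := fun n hn => by
      have := Nat.lt_floor_add_one |lam n|
      rw [hs n hn] at this
      exact this.le
    obtain ⟨hfin, hcount⟩ := hC (k + 1) (by positivity)
    calc (s.card : ℝ) = ((s : Set ℕ).ncard : ℝ) := by rw [Set.ncard_coe_finset]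
      _ ≤ ({n | |lam n| ≤ k + 1}.ncard : ℝ) := by exact_mod_cast Set.ncard_le_ncard hsub hfin
      _ ≤ C * (1 + (k + 1)) ^ m := hcount
      _ = C * ((k + 2 : ℕ) : ℝ) ^ m := by push_cast; ring_nf
  exact summable_of_le_comp_of_card_le _ (fun n => (exp_pos _).le) hle (fun k => (exp_pos _).le)
    hcard ((summable_natCast_add_pow_mul_exp_neg 2 m).mul_left C |>.congr fun k => by ring)

end WeylBound

theorem stmt_8_general (m : ℕ) (lam : ℕ → ℝ) (hlam : ∀ n, lam n ≠ 0)
    (hW : WeylBound lam m) :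
    ∃ C > (0 : ℝ), ∃ c > (0 : ℝ), ∀ t : ℝ, 1 ≤ t →
      (∑' n : ℕ, (1 / 2 : ℝ) * erfc (|lam n| * Real.sqrt t)) ≤ C * Real.exp (-(c * t)) := by
  obtain ⟨δ, hδ, hδle⟩ := hW.exists_pos_le_abs hlam
  have hS := hW.summable_exp_neg_sq
  have hSpos : 0 < ∑' n, exp (-lam n ^ 2) := hS.tsum_pos (fun n => (exp_pos _).le) 0 (exp_pos _)
  refine ⟨exp (δ ^ 2) / 2 * ∑' n, exp (-lam n ^ 2), by positivity, δ ^ 2, by positivity,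
    fun t ht => ?_⟩
  have hterm : ∀ n, 1 / 2 * erfc (|lam n| * √t)
      ≤ exp (δ ^ 2) / 2 * exp (-(δ ^ 2 * t)) * exp (-lam n ^ 2) := fun n => by
    have hδn : δ ^ 2 ≤ lam n ^ 2 := (pow_le_pow_left₀ hδ.le (hδle n) 2).trans_eq (sq_abs _)
    linarith [erfc_abs_mul_sqrt_le hδn ht]
  have hdom := hS.mul_left (exp (δ ^ 2) / 2 * exp (-(δ ^ 2 * t)))
  calc ∑' n, 1 / 2 * erfc (|lam n| * √t)
      ≤ ∑' n, exp (δ ^ 2) / 2 * exp (-(δ ^ 2 * t)) * exp (-lam n ^ 2) :=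
        Summable.tsum_le_tsum hterm
          (hdom.of_nonneg_of_le (fun n => by have := erfc_nonneg (|lam n| * √t); positivity) hterm)
          hdom
    _ = exp (δ ^ 2) / 2 * (∑' n, exp (-lam n ^ 2)) * exp (-(δ ^ 2 * t)) := by
        rw [tsum_mul_left]
        ring

/-- Large-time exponential decay of `Σ (1/2)·erfc(|λ_n|·√t)`. -/
theorem stmt_8 (m : ℕ) (hm : 0 < m) (lam : ℕ → ℝ) (hlam : ∀ n, lam n ≠ 0)
    (hW : WeylBound lam m) :
    ∃ C > (0 : ℝ), ∃ c > (0 : ℝ), ∀ t : ℝ, 1 ≤ t →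
      (∑' n : ℕ, (1 / 2 : ℝ) * erfc (|lam n| * Real.sqrt t)) ≤ C * Real.exp (-(c * t)) :=
  stmt_8_general m lam hlam hW
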